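/- arXiv:1211.5896 — 3 statements merged into one kernel-verified Lean document; each statement's English description precedes it below -/
import Mathlib

section
/- Let f be a continuously differentiable real-valued function on [a,b], let δ > 0 and x ∈ ℝ. Then (1/(2δ)) ∫_a^b 1_{|f(t)-x| ≤ δ} |f'(t)| dt ≤ N_{f'}(0,[a,b]) + 1, where N_{f'}(0,[a,b]) denotes the number of zeros of f' in [a,b] (assumed finite). -/
/-!
Where `f' ≠ 0` on an interval, `f` is injective there (Darboux), so by the change of variables
`y = f t` the integral of `|f'|` over `{|f - x| ≤ δ}` is the length of a subset of `[x - δ, x + δ]`,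
hence at most `2δ`. The zeros of `f'` cut `[a, b]` into at most `N + 1` such intervals.
-/

open Set MeasureTheory Finset

section SublevelIntegral

variable {f f' : ℝ → ℝ} {x δ : ℝ}

theorem Convex.injOn_of_hasDerivWithinAt_ne_zero {s : Set ℝ} (hs : Convex ℝ s)
    (hf : ∀ t ∈ s, HasDerivWithinAt f (f' t) s t) (hf' : ∀ t ∈ s, f' t ≠ 0) : InjOn f s := by
  have hcont : ContinuousOn f s := fun t ht => (hf t ht).continuousWithinAt
  have hint : ∀ t ∈ interior s, HasDerivWithinAt f (f' t) (interior s) t :=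
    fun t ht => (hf t (interior_subset ht)).mono interior_subset
  rcases hasDerivWithinAt_forall_lt_or_forall_gt_of_forall_ne hs hf hf' with hneg | hpos
  · exact (strictAntiOn_of_hasDerivWithinAt_neg hs hcont hint
      fun t ht => hneg t (interior_subset ht)).injOn
  · exact (strictMonoOn_of_hasDerivWithinAt_pos hs hcont hint
      fun t ht => hpos t (interior_subset ht)).injOn

theorem setIntegral_sublevel_abs_deriv_le_of_injOn {s : Set ℝ} (hs : MeasurableSet s)
    (hf : ∀ t ∈ s, HasDerivWithinAt f (f' t) s t) (hinj : InjOn f s) (hδ : 0 ≤ δ) :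
    ∫ t in s, (if |f t - x| ≤ δ then |f' t| else 0) ≤ 2 * δ := by
  have hintegrand : ∀ t, (if |f t - x| ≤ δ then |f' t| else 0)
      = |f' t| • (Metric.closedBall x δ).indicator 1 (f t) := by
    intro t
    by_cases h : |f t - x| ≤ δ <;> simp [h, Real.dist_eq]
  calc ∫ t in s, (if |f t - x| ≤ δ then |f' t| else 0)
      = ∫ y in f '' s, (Metric.closedBall x δ).indicator 1 y := by
        simp_rw [hintegrand, integral_image_eq_integral_abs_deriv_smul hs hf hinj]
    _ = volume.real (Metric.closedBall x δ ∩ f '' s) := by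
        rw [integral_indicator_one measurableSet_closedBall,
          measureReal_restrict_apply measurableSet_closedBall]
    _ ≤ volume.real (Metric.closedBall x δ) :=
        measureReal_mono inter_subset_left measure_closedBall_lt_top.ne
    _ = 2 * δ := Real.volume_real_closedBall hδ

theorem intervalIntegral_sublevel_abs_deriv_le_of_deriv_ne_zero {a b : ℝ} (hab : a ≤ b)
    (hf : ∀ t ∈ Ioo a b, HasDerivAt f (f' t) t) (hf' : ∀ t ∈ Ioo a b, f' t ≠ 0) (hδ : 0 ≤ δ) :
    ∫ t in a..b, (if |f t - x| ≤ δ then |f' t| else 0) ≤ 2 * δ := by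
  have hderiv : ∀ t ∈ Ioo a b, HasDerivWithinAt f (f' t) (Ioo a b) t :=
    fun t ht => (hf t ht).hasDerivWithinAt
  rw [intervalIntegral.integral_of_le hab, integral_Ioc_eq_integral_Ioo]
  exact setIntegral_sublevel_abs_deriv_le_of_injOn measurableSet_Ioo hderiv
    ((convex_Ioo a b).injOn_of_hasDerivWithinAt_ne_zero hderiv hf') hδ

theorem intervalIntegral_sublevel_abs_deriv_le {a b : ℝ} (hab : a ≤ b)
    (hf : ∀ t ∈ Ioo a b, HasDerivAt f (f' t) t) (S : Finset ℝ)
    (hS : ∀ t ∈ Ioo a b, f' t = 0 → t ∈ S) (hδ : 0 ≤ δ) :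
    ∫ t in a..b, (if |f t - x| ≤ δ then |f' t| else 0) ≤ 2 * δ * (#S + 1) := by
  induction S using Finset.induction_on_max generalizing b with
  | empty =>
    simpa using intervalIntegral_sublevel_abs_deriv_le_of_deriv_ne_zero hab hf
      (fun t ht h0 => by simpa using hS t ht h0) hδ
  | insert c S hlt ih =>
    have hδS : 0 ≤ 2 * δ * (#S + 1) := by positivity
    rw [card_insert_of_notMem fun hc => (hlt c hc).false, Nat.cast_succ]
    by_cases hbc : b ≤ c
    · have hS' : ∀ t ∈ Ioo a b, f' t = 0 → t ∈ S := fun t ht h0 =>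
        (Finset.mem_insert.1 (hS t ht h0)).resolve_left (ht.2.trans_le hbc).ne
      linarith [ih hab hf hS']
    push Not at hbc
    -- `c` is the largest point of `insert c S`, so `f' ≠ 0` on `(max a c, b)`.
    set c' := max a c
    have hc'b : c' ≤ b := max_le hab hbc.le
    by_cases hint : IntervalIntegrable (fun t => if |f t - x| ≤ δ then |f' t| else 0) volume a b
    swap
    · rw [intervalIntegral.integral_undef hint]
      positivity
    have hc' : c' ∈ uIcc a b := uIcc_of_le hab ▸ ⟨le_max_left a c, hc'b⟩
    rw [← intervalIntegral.integral_add_adjacent_intervals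
      (hint.mono_set (uIcc_subset_uIcc left_mem_uIcc hc'))
      (hint.mono_set (uIcc_subset_uIcc hc' right_mem_uIcc))]
    have hsub_left : Ioo a c' ⊆ Ioo a b := Ioo_subset_Ioo_right hc'b
    have hsub_right : Ioo c' b ⊆ Ioo a b := Ioo_subset_Ioo_left (le_max_left a c)
    have hleft := ih (le_max_left a c) (fun t ht => hf t (hsub_left ht)) fun t ht h0 =>
      (Finset.mem_insert.1 (hS t (hsub_left ht) h0)).resolve_left
        ((lt_max_iff.1 ht.2).resolve_left ht.1.not_gt).ne
    have hright := intervalIntegral_sublevel_abs_deriv_le_of_deriv_ne_zero (x := x) hc'b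
      (fun t ht => hf t (hsub_right ht)) (fun t ht h0 => by
        have hct : c < t := (le_max_right a c).trans_lt ht.1
        rcases Finset.mem_insert.1 (hS t (hsub_right ht) h0) with rfl | htS
        exacts [hct.false, (hlt t htS).not_gt hct]) hδ
    linarith

end SublevelIntegral

theorem kac_integral_bound (a b δ x : ℝ) (hab : a ≤ b) (hδ : 0 < δ) (f : ℝ → ℝ)
    (hf : ContDiffOn ℝ 1 f (Icc a b))
    (hfin : {t ∈ Icc a b | derivWithin f (Icc a b) t = 0}.Finite) :
    (1 / (2 * δ)) * (∫ t in a..b, if |f t - x| ≤ δ then |derivWithin f (Icc a b) t| else 0)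
      ≤ ({t ∈ Icc a b | derivWithin f (Icc a b) t = 0}.ncard : ℝ) + 1 := by
  have hderiv : ∀ t ∈ Ioo a b, HasDerivAt f (derivWithin f (Icc a b) t) t := fun t ht =>
    ((hf.differentiableOn one_ne_zero t (Ioo_subset_Icc_self ht)).hasDerivWithinAt).hasDerivAt
      (Icc_mem_nhds ht.1 ht.2)
  have hbound := intervalIntegral_sublevel_abs_deriv_le (x := x) hab hderiv hfin.toFinset
    (fun t ht h0 => by simpa using ⟨Ioo_subset_Icc_self ht, h0⟩) hδ.le
  rw [ncard_eq_toFinset_card _ hfin, one_div_mul_eq_div, div_le_iff₀ (by positivity)]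
  linarith
end

section
/- Let μ be a probability measure on ℝ² with finite second moments and let ψ(u,v) = ∫ e^{i(ux+vy)} dμ(x,y) be its characteristic function. Then for every u ∈ ℝ, lim_{A→∞} −(1/π) ∫_0^A (1/v)(∂ψ/∂v(u,v) − ∂ψ/∂v(u,−v)) dv = ∫_{ℝ²} |y| e^{iux} dμ(x,y). -/
/-!
Differentiating under the integral sign, `(1/v) (∂ᵥψ(u,v) - ∂ᵥψ(u,-v))` equals
`-2 ∫ y² sinc(vy) e^{iux} dμ`. This kernel is bounded by `y²`, so Fubini applies on `[0, A]` and,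
since `∫₀ᴬ y² sinc(vy) dv = y Si(Ay)` with `Si` the sine integral, the expression in the limit is
`(2/π) ∫ y Si(Ay) e^{iux} dμ`. As `Si` is bounded and `Si(x) → ±π/2` as `x → ±∞`, dominated
convergence (with dominating function `C |y|`) gives the limit `∫ |y| e^{iux} dμ`.

Dirichlet's limit `Si(A) → π/2` comes from writing `1/t = ∫₀^∞ e^{-tv} dv` and integrating in `t`
first: `Si(A) = π/2 - ∫₀^∞ e^{-Av} (cos A + v sin A)/(1 + v²) dv`, and the last integral is at
most `1/A` in absolute value because `|cos A + v sin A| ≤ 1 + v²`.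
-/

open MeasureTheory Filter Topology

/-- Joint characteristic function of a measure on `ℝ²`. -/
noncomputable def jointCharFun (μ : Measure (ℝ × ℝ)) (u v : ℝ) : ℂ :=
  ∫ p, Complex.exp (Complex.I * ((u * p.1 + v * p.2 : ℝ) : ℂ)) ∂μ

namespace Real

open Set

noncomputable def sineIntegral (x : ℝ) : ℝ := ∫ t in 0..x, sinc t

@[fun_prop]
lemma continuous_sineIntegral : Continuous sineIntegral :=
  intervalIntegral.continuous_primitive (continuous_sinc.intervalIntegrable) 0

lemma sineIntegral_neg (x : ℝ) : sineIntegral (-x) = -sineIntegral x := by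
  have h := intervalIntegral.integral_comp_neg (a := 0) (b := x) sinc
  simp only [sinc_neg, neg_zero] at h
  rw [sineIntegral, sineIntegral, intervalIntegral.integral_symm, ← h]

lemma integrableOn_exp_neg_mul_Ioi {t : ℝ} (ht : 0 < t) :
    IntegrableOn (fun v => exp (-t * v)) (Ioi 0) :=
  integrableOn_exp_mul_Ioi (neg_neg_of_pos ht) 0

lemma integral_exp_neg_mul_Ioi {t : ℝ} (ht : 0 < t) :
    ∫ v in Ioi 0, exp (-t * v) = t⁻¹ := by
  rw [integral_exp_mul_Ioi (neg_neg_of_pos ht)]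
  simp

lemma integral_exp_neg_mul_mul_sin (v A : ℝ) :
    ∫ t in 0..A, exp (-t * v) * sin t
      = (1 - exp (-A * v) * (cos A + v * sin A)) / (1 + v ^ 2) := by
  have hv : 1 + v ^ 2 ≠ 0 := by positivity
  have hderiv (t : ℝ) : HasDerivAt (fun t => -(exp (-t * v) * (cos t + v * sin t)) / (1 + v ^ 2))
      (exp (-t * v) * sin t) t := by
    have hexp : HasDerivAt (fun t => exp (-t * v)) (exp (-t * v) * -v) t := by
      simpa using ((hasDerivAt_neg t).mul_const v).exp
    refine ((hexp.mul ((hasDerivAt_cos t).add ((hasDerivAt_sin t).const_mul v))).neg.div_const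
      (1 + v ^ 2)).congr_deriv ?_
    simp only [Pi.add_apply]
    field_simp
    ring
  rw [intervalIntegral.integral_eq_sub_of_hasDerivAt (fun t _ => hderiv t)
    (by apply Continuous.intervalIntegrable; fun_prop)]
  simp only [neg_zero, zero_mul, exp_zero, cos_zero, sin_zero, mul_zero, add_zero, mul_one]
  ring

lemma sineIntegral_eq_integral_Ioi {A : ℝ} (hA : 0 ≤ A) :
    sineIntegral A = ∫ v in Ioi 0, (1 - exp (-A * v) * (cos A + v * sin A)) / (1 + v ^ 2) := by
  have hkernel : ∀ t ∈ Ioc 0 A, sinc t = ∫ v in Ioi 0, exp (-t * v) * sin t := fun t ht => by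
    rw [integral_mul_const, integral_exp_neg_mul_Ioi ht.1, sinc_of_ne_zero ht.1.ne', inv_mul_eq_div]
  have hint : Integrable (Function.uncurry fun t v => exp (-t * v) * sin t)
      ((volume.restrict (uIoc 0 A)).prod (volume.restrict (Ioi 0))) := by
    rw [uIoc_of_le hA]
    have hmeas : AEStronglyMeasurable (Function.uncurry fun t v => exp (-t * v) * sin t)
        ((volume.restrict (Ioc 0 A)).prod (volume.restrict (Ioi 0))) :=
      Continuous.aestronglyMeasurable (by fun_prop)
    rw [integrable_prod_iff hmeas]
    refine ⟨?_, (integrable_const (1 : ℝ)).mono' hmeas.norm.integral_prod_right' ?_⟩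
    · filter_upwards [ae_restrict_mem measurableSet_Ioc] with t ht
      exact (integrableOn_exp_neg_mul_Ioi ht.1).mul_const (sin t)
    · filter_upwards [ae_restrict_mem measurableSet_Ioc] with t ht
      have hsinc := abs_sinc_le_one t
      rw [sinc_of_ne_zero ht.1.ne', abs_div, abs_of_pos ht.1] at hsinc
      simp only [Function.uncurry_apply_pair, norm_mul, norm_of_nonneg (exp_pos _).le]
      rwa [integral_mul_const, integral_exp_neg_mul_Ioi ht.1, inv_mul_eq_div, norm_of_nonneg
        (div_nonneg (norm_nonneg _) ht.1.le), norm_eq_abs]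
  calc sineIntegral A = ∫ t in 0..A, ∫ v in Ioi 0, exp (-t * v) * sin t := by
        rw [sineIntegral, intervalIntegral.integral_of_le hA, intervalIntegral.integral_of_le hA]
        exact setIntegral_congr_fun measurableSet_Ioc hkernel
    _ = ∫ v in Ioi 0, (1 - exp (-A * v) * (cos A + v * sin A)) / (1 + v ^ 2) := by
        rw [intervalIntegral_integral_swap hint]
        simp only [integral_exp_neg_mul_mul_sin]

lemma abs_cos_add_mul_sin_div_le_one (A v : ℝ) : |(cos A + v * sin A) / (1 + v ^ 2)| ≤ 1 := by
  rw [abs_div, abs_of_pos (by positivity : (0 : ℝ) < 1 + v ^ 2), div_le_one (by positivity),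
    abs_le]
  constructor <;> nlinarith [sin_sq_add_cos_sq A, sq_nonneg (v * cos A - sin A),
    sq_nonneg (cos A + v * sin A - 1 - v ^ 2), sq_nonneg (cos A + v * sin A + 1 + v ^ 2)]

lemma tendsto_sineIntegral_atTop : Tendsto sineIntegral atTop (𝓝 (π / 2)) := by
  set R : ℝ → ℝ := fun A => ∫ v in Ioi 0, exp (-A * v) * ((cos A + v * sin A) / (1 + v ^ 2))
  have hbound (A v : ℝ) :
      ‖exp (-A * v) * ((cos A + v * sin A) / (1 + v ^ 2))‖ ≤ exp (-A * v) := by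
    rw [norm_mul, norm_of_nonneg (exp_pos _).le, norm_eq_abs]
    exact mul_le_of_le_one_right (exp_pos _).le (abs_cos_add_mul_sin_div_le_one A v)
  have hR_le {A : ℝ} (hA : 0 < A) : ‖R A‖ ≤ A⁻¹ := by
    rw [← integral_exp_neg_mul_Ioi hA]
    exact norm_integral_le_of_norm_le (integrableOn_exp_neg_mul_Ioi hA) (.of_forall (hbound A))
  have hR : Tendsto R atTop (𝓝 0) :=
    squeeze_zero_norm' ((eventually_gt_atTop 0).mono fun A hA => hR_le hA) tendsto_inv_atTop_zero
  have hSi {A : ℝ} (hA : 0 < A) : sineIntegral A = π / 2 - R A := by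
    have hR_int : IntegrableOn (fun v => exp (-A * v) * ((cos A + v * sin A) / (1 + v ^ 2)))
        (Ioi 0) :=
      (integrableOn_exp_neg_mul_Ioi hA).mono' (by fun_prop) (.of_forall (hbound A))
    have hπ : ∫ v in Ioi (0 : ℝ), (1 + v ^ 2)⁻¹ = π / 2 := by simp
    rw [sineIntegral_eq_integral_Ioi hA.le, ← hπ,
      ← integral_sub integrable_inv_one_add_sq.integrableOn hR_int]
    congr 1 with v
    ring
  simpa using (tendsto_const_nhds.sub hR).congr'
    ((eventually_gt_atTop 0).mono fun A hA => (hSi hA).symm)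

lemma tendsto_sineIntegral_atBot : Tendsto sineIntegral atBot (𝓝 (-(π / 2))) := by
  simpa [Function.comp_def, sineIntegral_neg] using
    (tendsto_sineIntegral_atTop.comp tendsto_neg_atBot_atTop).neg

lemma exists_abs_sineIntegral_le : ∃ C, ∀ x, |sineIntegral x| ≤ C := by
  obtain ⟨C, hC⟩ := isBounded_iff_forall_norm_le.1 <|
    continuous_sineIntegral.isBounded_range_iff_isBigO_atTop_atBot.2
      ⟨tendsto_sineIntegral_atTop.isBigO_one ℝ, tendsto_sineIntegral_atBot.isBigO_one ℝ⟩
  exact ⟨C, fun x => hC _ (mem_range_self x)⟩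

lemma mul_sineIntegral_mul_eq_abs (A y : ℝ) :
    y * sineIntegral (A * y) = |y| * sineIntegral (A * |y|) := by
  rcases abs_cases y with ⟨h, _⟩ | ⟨h, _⟩ <;> simp [h, sineIntegral_neg]

lemma tendsto_mul_sineIntegral_mul (y : ℝ) :
    Tendsto (fun A => y * sineIntegral (A * y)) atTop (𝓝 (π / 2 * |y|)) := by
  simp_rw [mul_sineIntegral_mul_eq_abs _ y, mul_comm (π / 2)]
  rcases eq_or_ne y 0 with rfl | hy
  · simp
  · exact (tendsto_sineIntegral_atTop.comp
      (tendsto_id.atTop_mul_const (abs_pos.2 hy))).const_mul _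

lemma integral_sq_mul_sinc_mul (A y : ℝ) :
    ∫ v in 0..A, y ^ 2 * sinc (v * y) = y * sineIntegral (A * y) := by
  rcases eq_or_ne y 0 with rfl | hy
  · simp
  · rw [intervalIntegral.integral_const_mul, intervalIntegral.integral_comp_mul_right _ hy,
      zero_mul, smul_eq_mul, sineIntegral]
    field_simp

end Real

lemma integrable_of_integrable_sq {α : Type*} [MeasurableSpace α] {ν : Measure α}
    [IsFiniteMeasure ν] {f : α → ℝ} (hf : AEStronglyMeasurable f ν)
    (hf2 : Integrable (fun x => f x ^ 2) ν) :
    Integrable f ν :=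
  ((memLp_two_iff_integrable_sq hf).2 hf2).integrable one_le_two

section JointCharFun

open Complex Set

variable {μ : Measure (ℝ × ℝ)}

lemma norm_I_mul_mul_exp_I_mul (y x : ℝ) : ‖I * y * exp (I * x)‖ = ‖y‖ := by
  rw [norm_mul, norm_mul, norm_exp_I_mul_ofReal, norm_I, norm_real, one_mul, mul_one]

lemma integrable_I_mul_snd_mul_exp (h1 : Integrable (fun p : ℝ × ℝ => p.2) μ) (u v : ℝ) :
    Integrable (fun p : ℝ × ℝ => I * p.2 * exp (I * ↑(u * p.1 + v * p.2))) μ :=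
  h1.norm.mono' (by fun_prop) (.of_forall fun p => (norm_I_mul_mul_exp_I_mul _ _).le)

lemma hasDerivAt_jointCharFun [IsFiniteMeasure μ] (h1 : Integrable (fun p : ℝ × ℝ => p.2) μ)
    (u v : ℝ) :
    HasDerivAt (jointCharFun μ u) (∫ p, I * p.2 * exp (I * ↑(u * p.1 + v * p.2)) ∂μ) v := by
  refine (hasDerivAt_integral_of_dominated_loc_of_deriv_le
    (F := fun w (p : ℝ × ℝ) => exp (I * ↑(u * p.1 + w * p.2)))
    (F' := fun w (p : ℝ × ℝ) => I * p.2 * exp (I * ↑(u * p.1 + w * p.2)))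
    (bound := fun p => ‖p.2‖)
    Filter.univ_mem (.of_forall fun _ => by fun_prop) ?_ (by fun_prop) ?_ h1.norm ?_).2
  · exact (integrable_const (1 : ℝ)).mono' (by fun_prop)
      (.of_forall fun p => (norm_exp_I_mul_ofReal _).le)
  · exact .of_forall fun p w _ => (norm_I_mul_mul_exp_I_mul _ _).le
  · refine .of_forall fun p w _ => ?_
    have h : HasDerivAt (fun w : ℝ => I * ↑(u * p.1 + w * p.2)) (I * p.2) w := by
      simpa using (((hasDerivAt_id w).mul_const p.2).const_add (u * p.1)).ofReal_comp.const_mul I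
    simpa [mul_comm] using h.cexp

lemma div_mul_sub_exp_eq_sinc (a y v : ℝ) (hv : v ≠ 0) :
    1 / (v : ℂ) * (I * y * exp (I * ↑(a + v * y)) - I * y * exp (I * ↑(a + -v * y)))
      = -2 * (((y ^ 2 * Real.sinc (v * y) : ℝ) : ℂ) * exp (I * a)) := by
  rcases eq_or_ne y 0 with rfl | hy
  · simp
  have hexp (b : ℝ) : exp (I * ↑(a + b)) = exp (I * a) * (cos b + sin b * I) := by
    rw [← exp_mul_I, ← exp_add]
    congr 1
    push_cast
    ring
  rw [hexp, hexp, Real.sinc_of_ne_zero (mul_ne_zero hv hy)]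
  push_cast
  rw [neg_mul, cos_neg, sin_neg]
  field_simp
  linear_combination (2 * y * sin (v * y) / v) * I_sq

lemma div_mul_deriv_sub_deriv_neg [IsFiniteMeasure μ] (h1 : Integrable (fun p : ℝ × ℝ => p.2) μ)
    (u : ℝ) {v : ℝ} (hv : v ≠ 0) :
    1 / (v : ℂ) * (deriv (jointCharFun μ u) v - deriv (jointCharFun μ u) (-v))
      = -2 * ∫ p, ((p.2 ^ 2 * Real.sinc (v * p.2) : ℝ) : ℂ) * exp (I * ↑(u * p.1)) ∂μ := by
  rw [(hasDerivAt_jointCharFun h1 u v).deriv, (hasDerivAt_jointCharFun h1 u (-v)).deriv,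
    ← integral_sub (integrable_I_mul_snd_mul_exp h1 u v) (integrable_I_mul_snd_mul_exp h1 u (-v)),
    ← integral_const_mul, ← integral_const_mul]
  exact integral_congr_ae (.of_forall fun p => div_mul_sub_exp_eq_sinc _ _ _ hv)

lemma integral_div_mul_deriv_sub_deriv_neg [IsFiniteMeasure μ]
    (h2 : Integrable (fun p : ℝ × ℝ => p.2 ^ 2) μ) (u : ℝ) {A : ℝ} (hA : 0 ≤ A) :
    ∫ v in 0..A, 1 / (v : ℂ) * (deriv (jointCharFun μ u) v - deriv (jointCharFun μ u) (-v))
      = -2 * ∫ p, ((p.2 * Real.sineIntegral (A * p.2) : ℝ) : ℂ) * exp (I * ↑(u * p.1)) ∂μ := by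
  have h1 := integrable_of_integrable_sq (by fun_prop) h2
  set k : ℝ → ℝ × ℝ → ℂ := fun v p =>
    ((p.2 ^ 2 * Real.sinc (v * p.2) : ℝ) : ℂ) * exp (I * ↑(u * p.1))
  have hk : Integrable (Function.uncurry k) ((volume.restrict (uIoc 0 A)).prod μ) := by
    rw [uIoc_of_le hA]
    refine (h2.comp_snd _).mono' (by fun_prop) (.of_forall fun ⟨v, p⟩ => ?_)
    simp only [Function.uncurry_apply_pair, k, norm_mul, norm_exp_I_mul_ofReal, norm_real,
      Real.norm_eq_abs, mul_one, abs_pow, sq_abs]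
    exact mul_le_of_le_one_right (sq_nonneg _) (Real.abs_sinc_le_one _)
  calc _ = ∫ v in 0..A, -2 * ∫ p, k v p ∂μ := by
        refine intervalIntegral.integral_congr_ae (.of_forall fun v hv => ?_)
        exact div_mul_deriv_sub_deriv_neg h1 u (uIoc_of_le hA ▸ hv).1.ne'
    _ = -2 * ∫ p, (∫ v in 0..A, k v p) ∂μ := by
        rw [intervalIntegral.integral_const_mul, intervalIntegral_integral_swap hk]
    _ = _ := by
        congr 2 with p
        rw [intervalIntegral.integral_mul_const, intervalIntegral.integral_ofReal,
          Real.integral_sq_mul_sinc_mul]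

lemma tendsto_integral_snd_mul_sineIntegral (h1 : Integrable (fun p : ℝ × ℝ => p.2) μ) (u : ℝ) :
    Tendsto
      (fun A => ∫ p, ((p.2 * Real.sineIntegral (A * p.2) : ℝ) : ℂ) * exp (I * ↑(u * p.1)) ∂μ)
      atTop (𝓝 (↑(Real.pi / 2) * ∫ p, ↑|p.2| * exp (I * ↑(u * p.1)) ∂μ)) := by
  rw [← integral_const_mul]
  simp_rw [← mul_assoc, ← ofReal_mul]
  obtain ⟨C, hC⟩ := Real.exists_abs_sineIntegral_le
  refine tendsto_integral_filter_of_dominated_convergence (fun p => C * |p.2|)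
    (.of_forall fun A => by fun_prop) (.of_forall fun A => .of_forall fun p => ?_)
    (h1.abs.const_mul C) (.of_forall fun p => ?_)
  · rw [norm_mul, norm_exp_I_mul_ofReal, norm_real, mul_one, Real.norm_eq_abs, abs_mul, mul_comm]
    exact mul_le_mul_of_nonneg_right (hC _) (abs_nonneg _)
  · exact (Real.tendsto_mul_sineIntegral_mul p.2).ofReal.mul_const _

end JointCharFun

theorem charFun_deriv_limit (μ : Measure (ℝ × ℝ)) [IsProbabilityMeasure μ]
    (hmom : Integrable (fun p : ℝ × ℝ => ‖p‖ ^ 2) μ) (u : ℝ) :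
    Tendsto (fun A : ℝ => -(1 / (Real.pi : ℂ)) *
        ∫ v in (0:ℝ)..A, (1 / (v : ℂ)) *
          (deriv (fun w : ℝ => jointCharFun μ u w) v
            - deriv (fun w : ℝ => jointCharFun μ u w) (-v)))
      atTop
      (𝓝 (∫ p, ((|p.2| : ℝ) : ℂ) * Complex.exp (Complex.I * ((u * p.1 : ℝ) : ℂ)) ∂μ)) := by
  have h2 : Integrable (fun p : ℝ × ℝ => p.2 ^ 2) μ :=
    hmom.mono' (by fun_prop) (.of_forall fun p => by
      simpa [sq_abs] using pow_le_pow_left₀ (abs_nonneg _) (norm_snd_le p) 2)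
  have h1 := integrable_of_integrable_sq (by fun_prop) h2
  have hlim := (tendsto_integral_snd_mul_sineIntegral h1 u).const_mul (2 / Real.pi : ℂ)
  have hπ : (2 / Real.pi : ℂ) * ((Real.pi / 2 : ℝ) : ℂ) = 1 := by
    push_cast
    field_simp
  rw [← mul_assoc, hπ, one_mul] at hlim
  refine hlim.congr' ((eventually_ge_atTop 0).mono fun A hA => ?_)
  dsimp only
  rw [integral_div_mul_deriv_sub_deriv_neg h2 u hA]
  ring
end

section
/- Let μ be a probability measure on ℝ² with finite second moments and characteristic function ψ. Then for every u ∈ ℝ, lim_{A→∞} −(1/π) ∫_0^A (1/v²)(ψ(u,v) + ψ(u,−v) − 2ψ(u,0)) dv = ∫_{ℝ²} |y| e^{iux} dμ(x,y). -/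
/-!
Pointwise `e^{i(a+b)} + e^{i(a-b)} - 2 e^{ia} = -2 (1 - cos b) e^{ia}`, so the integrand in `v` is
`-2 ∫ (1 - cos (v y)) / v² e^{iux} dμ`. The kernel is nonnegative and
`∫₀^A (1 - cos (v y)) / v² dv = |y| ∫₀^{A|y|} (1 - cos t) / t² dt` increases to `(π/2) |y|`, so
Fubini on `(0, A] × ℝ²` and dominated convergence as `A → ∞` apply with the bound `(π/2) |y|`.
The constant `∫₀^∞ (1 - cos t) / t² dt = π/2` comes from `1/t² = ∫₀^∞ s e^{-st} ds` and
`∫₀^∞ e^{-st} (1 - cos t) dt = 1 / (s (1 + s²))`, by swapping the two integrals.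
-/

open MeasureTheory Filter Topology

open Set Real

lemma integral_exp_neg_mul_mul_one_sub_cos {s : ℝ} (hs : 0 < s) :
    ∫ x in Ioi 0, exp (-s * x) * (1 - cos x) = 1 / (s * (1 + s ^ 2)) := by
  have h₁ : ((-s : ℂ)).re < 0 := by simpa using hs
  have h₂ : ((-s + Complex.I : ℂ)).re < 0 := by simpa using hs
  set f : ℝ → ℂ := fun x => Complex.exp ((-s : ℂ) * x) - Complex.exp ((-s + Complex.I) * x)
  have hfi : IntegrableOn f (Ioi 0) :=
    (integrableOn_exp_mul_complex_Ioi h₁ 0).sub (integrableOn_exp_mul_complex_Ioi h₂ 0)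
  have hf : ∫ x in Ioi 0, f x = 1 / s + 1 / (-s + Complex.I) := by
    rw [integral_sub (integrableOn_exp_mul_complex_Ioi h₁ 0)
      (integrableOn_exp_mul_complex_Ioi h₂ 0), integral_exp_mul_complex_Ioi h₁,
      integral_exp_mul_complex_Ioi h₂]
    simp only [Complex.ofReal_zero, mul_zero, Complex.exp_zero]
    ring
  have hre : ∀ x : ℝ, exp (-s * x) * (1 - cos x) = RCLike.re (f x) := fun x => by
    simp [f, Complex.exp_re, mul_sub]
  simp_rw [hre]
  rw [integral_re hfi, hf]
  simp only [RCLike.re_to_complex, one_div, Complex.add_re, Complex.inv_re, Complex.normSq_apply,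
    Complex.add_im, Complex.neg_re, Complex.neg_im, Complex.ofReal_re, Complex.ofReal_im,
    Complex.I_re, Complex.I_im]
  field_simp
  ring

lemma integral_mul_exp_neg_mul {x : ℝ} (hx : 0 < x) :
    ∫ s in Ioi 0, s * exp (-s * x) = 1 / x ^ 2 := by
  have h := integral_rpow_mul_exp_neg_mul_Ioi two_pos hx
  norm_num [Gamma_two, mul_comm x] at h
  simpa [neg_mul, one_div] using h

lemma integral_mul_exp_neg_mul_mul_one_sub_cos_eq_inv_one_add_sq {s : ℝ} (hs : 0 < s) :
    ∫ x in Ioi 0, s * (exp (-s * x) * (1 - cos x)) = (1 + s ^ 2)⁻¹ := by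
  rw [integral_const_mul, integral_exp_neg_mul_mul_one_sub_cos hs]
  field_simp

lemma integral_mul_exp_neg_mul_mul_one_sub_cos_eq_one_sub_cos_div_sq {x : ℝ} (hx : 0 < x) :
    ∫ s in Ioi 0, s * (exp (-s * x) * (1 - cos x)) = (1 - cos x) / x ^ 2 := by
  simp_rw [← mul_assoc, integral_mul_const, integral_mul_exp_neg_mul hx]
  ring

lemma integrable_mul_exp_neg_mul_mul_one_sub_cos :
    Integrable (Function.uncurry fun s x : ℝ => s * (exp (-s * x) * (1 - cos x)))
      ((volume.restrict (Ioi 0)).prod (volume.restrict (Ioi 0))) := by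
  have hnonneg : ∀ s x : ℝ, 0 ≤ s → 0 ≤ s * (exp (-s * x) * (1 - cos x)) := fun s x hs =>
    mul_nonneg hs (mul_nonneg (exp_pos _).le (sub_nonneg.2 (cos_le_one x)))
  refine (integrable_prod_iff (by fun_prop)).2 ⟨?_, ?_⟩
  · filter_upwards [ae_restrict_mem measurableSet_Ioi] with s (hs : 0 < s)
    refine ((integrableOn_exp_mul_Ioi (neg_lt_zero.2 hs) 0).const_mul (2 * s)).mono'
      (by fun_prop) (.of_forall fun x => ?_)
    rw [Function.uncurry_apply_pair, Real.norm_of_nonneg (hnonneg s x hs.le)]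
    calc s * (exp (-s * x) * (1 - cos x)) ≤ s * (exp (-s * x) * 2) := by
          gcongr; linarith [neg_one_le_cos x]
      _ = 2 * s * exp (-s * x) := by ring
  · refine (integrable_inv_one_add_sq.restrict (s := Ioi 0)).congr ?_
    filter_upwards [ae_restrict_mem measurableSet_Ioi] with s (hs : 0 < s)
    simp_rw [Function.uncurry_apply_pair, Real.norm_of_nonneg (hnonneg s _ hs.le),
      integral_mul_exp_neg_mul_mul_one_sub_cos_eq_inv_one_add_sq hs]

lemma integrableOn_one_sub_cos_div_sq_Ioi :
    IntegrableOn (fun x : ℝ => (1 - cos x) / x ^ 2) (Ioi 0) := by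
  refine integrable_mul_exp_neg_mul_mul_one_sub_cos.integral_prod_right.congr ?_
  filter_upwards [ae_restrict_mem measurableSet_Ioi] with x (hx : 0 < x)
  exact integral_mul_exp_neg_mul_mul_one_sub_cos_eq_one_sub_cos_div_sq hx

lemma integral_one_sub_cos_div_sq_Ioi : ∫ x in Ioi 0, (1 - cos x) / x ^ 2 = π / 2 := calc
  _ = ∫ x in Ioi 0, ∫ s in Ioi 0, s * (exp (-s * x) * (1 - cos x)) :=
      setIntegral_congr_fun measurableSet_Ioi fun x hx =>
        (integral_mul_exp_neg_mul_mul_one_sub_cos_eq_one_sub_cos_div_sq hx).symm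
  _ = ∫ s in Ioi 0, ∫ x in Ioi 0, s * (exp (-s * x) * (1 - cos x)) :=
      (integral_integral_swap integrable_mul_exp_neg_mul_mul_one_sub_cos).symm
  _ = ∫ s in Ioi 0, (1 + s ^ 2)⁻¹ :=
      setIntegral_congr_fun measurableSet_Ioi fun s hs =>
        integral_mul_exp_neg_mul_mul_one_sub_cos_eq_inv_one_add_sq hs
  _ = π / 2 := by simp [integral_Ioi_inv_one_add_sq]

lemma one_sub_cos_div_sq_nonneg (x y : ℝ) : 0 ≤ (1 - cos x) / y ^ 2 :=
  div_nonneg (sub_nonneg.2 (cos_le_one x)) (sq_nonneg y)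

lemma one_sub_cos_mul_div_sq_le (v y : ℝ) : (1 - cos (v * y)) / v ^ 2 ≤ y ^ 2 / 2 := by
  rcases eq_or_ne v 0 with rfl | hv
  · simp only [zero_mul, cos_zero, sub_self, zero_div]
    positivity
  · rw [div_le_iff₀ (by positivity)]
    linarith [one_sub_sq_div_two_le_cos (x := v * y)]

lemma intervalIntegral_one_sub_cos_mul_div_sq (A y : ℝ) :
    ∫ v in 0..A, (1 - cos (v * y)) / v ^ 2 = |y| * ∫ t in 0..A * |y|, (1 - cos t) / t ^ 2 := by
  rcases eq_or_ne y 0 with rfl | hy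
  · simp
  have hc : |y| ≠ 0 := abs_ne_zero.2 hy
  have hscale : ∀ v : ℝ, (1 - cos (v * y)) / v ^ 2
      = |y| ^ 2 * ((1 - cos (v * |y|)) / (v * |y|) ^ 2) := by
    intro v
    have hcos : cos (v * |y|) = cos (v * y) := by
      rcases abs_choice y with h | h <;> simp [h]
    rw [hcos, mul_pow, sq_abs]
    rcases eq_or_ne v 0 with rfl | hv
    · simp
    · field_simp
  simp_rw [hscale, intervalIntegral.integral_const_mul,
    intervalIntegral.integral_comp_mul_right (fun t => (1 - cos t) / t ^ 2) hc, zero_mul,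
    smul_eq_mul]
  field_simp

lemma tendsto_intervalIntegral_one_sub_cos_div_sq :
    Tendsto (fun B => ∫ t in 0..B, (1 - cos t) / t ^ 2) atTop (𝓝 (π / 2)) :=
  integral_one_sub_cos_div_sq_Ioi ▸
    intervalIntegral_tendsto_integral_Ioi 0 integrableOn_one_sub_cos_div_sq_Ioi tendsto_id

lemma intervalIntegral_one_sub_cos_div_sq_le {B : ℝ} (hB : 0 ≤ B) :
    ∫ t in 0..B, (1 - cos t) / t ^ 2 ≤ π / 2 := by
  rw [intervalIntegral.integral_of_le hB, ← integral_one_sub_cos_div_sq_Ioi]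
  exact setIntegral_mono_set integrableOn_one_sub_cos_div_sq_Ioi
    (.of_forall fun t => one_sub_cos_div_sq_nonneg t t) Ioc_subset_Ioi_self.eventuallyLE

lemma tendsto_intervalIntegral_one_sub_cos_mul_div_sq (y : ℝ) :
    Tendsto (fun A => ∫ v in 0..A, (1 - cos (v * y)) / v ^ 2) atTop (𝓝 (π / 2 * |y|)) := by
  simp_rw [intervalIntegral_one_sub_cos_mul_div_sq, mul_comm (π / 2)]
  rcases (abs_nonneg y).eq_or_lt with hy | hy
  · simp [← hy]
  · exact (tendsto_intervalIntegral_one_sub_cos_div_sq.comp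
      (tendsto_id.atTop_mul_const hy)).const_mul _

lemma intervalIntegral_one_sub_cos_mul_div_sq_le {A : ℝ} (hA : 0 ≤ A) (y : ℝ) :
    ∫ v in 0..A, (1 - cos (v * y)) / v ^ 2 ≤ π / 2 * |y| := by
  rw [intervalIntegral_one_sub_cos_mul_div_sq, mul_comm (π / 2)]
  exact mul_le_mul_of_nonneg_left
    (intervalIntegral_one_sub_cos_div_sq_le (mul_nonneg hA (abs_nonneg y))) (abs_nonneg y)

lemma integrableOn_one_sub_cos_mul_div_sq_Ioc (y A : ℝ) :
    IntegrableOn (fun v => (1 - cos (v * y)) / v ^ 2) (Ioc 0 A) :=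
  (integrableOn_const (C := y ^ 2 / 2) measure_Ioc_lt_top.ne).mono'
    (Measurable.aestronglyMeasurable (by fun_prop)) (.of_forall fun v => by
    rw [Real.norm_of_nonneg (one_sub_cos_div_sq_nonneg _ _)]
    exact one_sub_cos_mul_div_sq_le v y)

section

variable {α E : Type*} [MeasurableSpace α] {μ : Measure α} [NormedAddCommGroup E]
  [NormedSpace ℝ E] {Y : α → ℝ} {g : α → E} {C : ℝ}

lemma integrable_one_sub_cos_mul_div_sq_smul_prod [SFinite μ] (hY : Integrable Y μ)
    (hg : AEStronglyMeasurable g μ) (hgC : ∀ᵐ a ∂μ, ‖g a‖ ≤ C) {A : ℝ} (hA : 0 ≤ A) :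
    Integrable (fun z : α × ℝ => ((1 - cos (z.2 * Y z.1)) / z.2 ^ 2) • g z.1)
      (μ.prod (volume.restrict (Ioc 0 A))) := by
  have hm : AEStronglyMeasurable (fun z : α × ℝ => ((1 - cos (z.2 * Y z.1)) / z.2 ^ 2) • g z.1)
      (μ.prod (volume.restrict (Ioc 0 A))) := by
    refine AEStronglyMeasurable.smul ?_ hg.comp_fst
    have : Measurable fun p : ℝ × ℝ => (1 - cos (p.1 * p.2)) / p.1 ^ 2 := by fun_prop
    exact (this.comp_aemeasurable (measurable_snd.aemeasurable.prodMk
      hY.aemeasurable.comp_fst)).aestronglyMeasurable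
  refine (integrable_prod_iff hm).2 ⟨.of_forall fun a =>
    (integrableOn_one_sub_cos_mul_div_sq_Ioc (Y a) A).smul_const (g a), ?_⟩
  refine (hY.norm.const_mul (π / 2 * C)).mono' hm.norm.integral_prod_right' ?_
  filter_upwards [hgC] with a ha
  rw [Real.norm_of_nonneg (integral_nonneg fun _ => norm_nonneg _)]
  simp_rw [norm_smul, Real.norm_of_nonneg (one_sub_cos_div_sq_nonneg _ _)]
  rw [integral_mul_const, ← intervalIntegral.integral_of_le hA, Real.norm_eq_abs]
  calc _ ≤ π / 2 * |Y a| * C :=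
        mul_le_mul (intervalIntegral_one_sub_cos_mul_div_sq_le hA (Y a)) ha (norm_nonneg _)
          (by positivity)
    _ = _ := by ring

lemma intervalIntegral_integral_one_sub_cos_mul_div_sq_smul [CompleteSpace E] [SFinite μ]
    (hY : Integrable Y μ) (hg : AEStronglyMeasurable g μ) (hgC : ∀ᵐ a ∂μ, ‖g a‖ ≤ C) {A : ℝ}
    (hA : 0 ≤ A) :
    ∫ v in 0..A, ∫ a, ((1 - cos (v * Y a)) / v ^ 2) • g a ∂μ
      = ∫ a, (∫ v in 0..A, (1 - cos (v * Y a)) / v ^ 2) • g a ∂μ := by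
  rw [intervalIntegral.integral_of_le hA, ← integral_integral_swap
    (integrable_one_sub_cos_mul_div_sq_smul_prod hY hg hgC hA)]
  simp_rw [integral_smul_const, intervalIntegral.integral_of_le hA]

theorem tendsto_intervalIntegral_integral_one_sub_cos_mul_div_sq_smul [CompleteSpace E]
    [SFinite μ] (hY : Integrable Y μ) (hg : AEStronglyMeasurable g μ) (hgC : ∀ᵐ a ∂μ, ‖g a‖ ≤ C) :
    Tendsto (fun A => ∫ v in 0..A, ∫ a, ((1 - cos (v * Y a)) / v ^ 2) • g a ∂μ) atTop
      (𝓝 ((π / 2) • ∫ a, |Y a| • g a ∂μ)) := by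
  rw [← integral_smul]
  refine (tendsto_integral_filter_of_dominated_convergence (fun a => π / 2 * ‖Y a‖ * C)
    (F := fun A a => (∫ v in 0..A, (1 - cos (v * Y a)) / v ^ 2) • g a)
    ?_ ?_ ((hY.norm.const_mul _).mul_const _) ?_).congr' ?_
  · filter_upwards [eventually_ge_atTop 0] with A hA
    refine (integrable_one_sub_cos_mul_div_sq_smul_prod hY hg hgC hA).integral_prod_left
      |>.aestronglyMeasurable.congr (.of_forall fun a => ?_)
    simp only [integral_smul_const, intervalIntegral.integral_of_le hA]
  · filter_upwards [eventually_ge_atTop 0] with A hA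
    filter_upwards [hgC] with a ha
    rw [norm_smul, Real.norm_of_nonneg (intervalIntegral.integral_nonneg hA
      fun _ _ => one_sub_cos_div_sq_nonneg _ _), Real.norm_eq_abs]
    exact mul_le_mul (intervalIntegral_one_sub_cos_mul_div_sq_le hA (Y a)) ha (norm_nonneg _)
      (by positivity)
  · refine .of_forall fun a => ?_
    rw [smul_smul]
    exact (tendsto_intervalIntegral_one_sub_cos_mul_div_sq (Y a)).smul_const (g a)
  · filter_upwards [eventually_ge_atTop 0] with A hA
    exact (intervalIntegral_integral_one_sub_cos_mul_div_sq_smul hY hg hgC hA).symm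

end

lemma cexp_I_mul_second_difference (a b : ℝ) :
    Complex.exp (Complex.I * ↑(a + b)) + Complex.exp (Complex.I * ↑(a - b))
      - 2 * Complex.exp (Complex.I * a) = (-2 * (1 - cos b)) • Complex.exp (Complex.I * a) := by
  have hadd : Complex.exp (Complex.I * ↑(a + b))
      = Complex.exp (Complex.I * a) * Complex.exp (b * Complex.I) := by
    rw [← Complex.exp_add]; push_cast; ring_nf
  have hsub : Complex.exp (Complex.I * ↑(a - b))
      = Complex.exp (Complex.I * a) * Complex.exp (-b * Complex.I) := by
    rw [← Complex.exp_add]; push_cast; ring_nf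
  rw [hadd, hsub, Complex.real_smul]
  push_cast
  linear_combination (-Complex.exp (Complex.I * a)) * Complex.two_cos b

lemma integrable_cexp_I_mul_ofReal {α : Type*} [MeasurableSpace α] {μ : Measure α}
    [IsFiniteMeasure μ] {f : α → ℝ} (hf : AEMeasurable f μ) :
    Integrable (fun a => Complex.exp (Complex.I * f a)) μ := by
  refine Integrable.of_bound (by fun_prop) 1 (.of_forall fun a => ?_)
  rw [mul_comm, Complex.norm_exp_ofReal_mul_I]

lemma jointCharFun_second_difference_div_sq (μ : Measure (ℝ × ℝ)) [IsFiniteMeasure μ]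
    (u v : ℝ) :
    (1 / (v : ℂ) ^ 2) * (jointCharFun μ u v + jointCharFun μ u (-v) - 2 * jointCharFun μ u 0)
      = -2 * ∫ p, ((1 - cos (v * p.2)) / v ^ 2) • Complex.exp (Complex.I * ↑(u * p.1)) ∂μ := by
  have hint : ∀ w : ℝ,
      Integrable (fun p : ℝ × ℝ => Complex.exp (Complex.I * ↑(u * p.1 + w * p.2))) μ :=
    fun w => integrable_cexp_I_mul_ofReal (by fun_prop)
  have hsum : jointCharFun μ u v + jointCharFun μ u (-v) - 2 * jointCharFun μ u 0
      = ∫ p, (-2 * (1 - cos (v * p.2))) • Complex.exp (Complex.I * ↑(u * p.1)) ∂μ := by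
    rw [jointCharFun, jointCharFun, jointCharFun, ← integral_add (hint v) (hint (-v)),
      ← integral_const_mul, ← integral_sub
        ((hint v).add (hint (-v)) : Integrable (fun p => _ + _) μ) ((hint 0).const_mul 2)]
    refine integral_congr_ae (.of_forall fun p => ?_)
    simpa [neg_mul, ← sub_eq_add_neg] using cexp_I_mul_second_difference (u * p.1) (v * p.2)
  rw [hsum, ← integral_const_mul, ← integral_const_mul]
  refine integral_congr_ae (.of_forall fun p => ?_)
  simp only [Complex.real_smul]
  push_cast
  ring

theorem charFun_second_difference_limit (μ : Measure (ℝ × ℝ)) [IsProbabilityMeasure μ]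
    (hmom : Integrable (fun p : ℝ × ℝ => ‖p‖ ^ 2) μ) (u : ℝ) :
    Tendsto (fun A : ℝ => -(1 / (Real.pi : ℂ)) *
        ∫ v in (0:ℝ)..A, (1 / (v : ℂ) ^ 2) *
          (jointCharFun μ u v + jointCharFun μ u (-v) - 2 * jointCharFun μ u 0))
      atTop
      (𝓝 (∫ p, ((|p.2| : ℝ) : ℂ) * Complex.exp (Complex.I * ((u * p.1 : ℝ) : ℂ)) ∂μ)) := by
  have hY : Integrable (fun p : ℝ × ℝ => p.2) μ :=
    (((memLp_two_iff_integrable_sq_norm aestronglyMeasurable_id).2 hmom).integrable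
      one_le_two).snd
  have hg : ∀ p : ℝ × ℝ, ‖Complex.exp (Complex.I * ((u * p.1 : ℝ) : ℂ))‖ ≤ 1 := fun p => by
    rw [mul_comm, Complex.norm_exp_ofReal_mul_I]
  simp_rw [jointCharFun_second_difference_div_sq, intervalIntegral.integral_const_mul,
    ← mul_assoc]
  convert (tendsto_intervalIntegral_integral_one_sub_cos_mul_div_sq_smul hY (by fun_prop)
    (.of_forall hg)).const_mul (-(1 / (π : ℂ)) * -2) using 2
  simp_rw [Complex.real_smul]
  push_cast
  field_simp
end
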